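/- On a ring road with two links of capacities C_1 < C_2, suppose asymptotic stationary states on each link have common flux q and each link is either uniformly UC (state (q, C_i)), uniformly SOC (state (C_i, q) with q < C_i), or a stationary shock SS (upstream (q, C_i), downstream (C_i, q), q < C_i), and the boundary flux conditions of Theorem 3 hold at both boundaries. Then link 1 cannot be in state SS, and it is impossible that link 1 is SOC while link 2 is UC or SS; hence the only possible configurations are: (a) both links UC with q ≤ C_1; (b) link 1 critical (q = C_1) and link 2 SS; (c) link 1 critical and link 2 SOC with q = C_1; (d) both links SOC with q < C_1. -/
import Mathlib


/-- Possible asymptotic stationary configurations of a link on the ring road: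
uniformly under-critical (UC), uniformly strictly over-critical (SOC), or a
stationary shock (SS) with an upstream SUC part and a downstream SOC part. -/
inductive LinkState where
  | UC : LinkState
  | SOC : LinkState
  | SS : LinkState
deriving DecidableEq

/-- Demand at the downstream end of a link with capacity `C` carrying flux `q`:
`q` for a UC link `(q, C)`, and `C` for a SOC link `(C, q)` or the downstream SOC
part of an SS link. -/
def downDemand (C q : ℝ) : LinkState → ℝ
  | LinkState.UC => q
  | LinkState.SOC => C
  | LinkState.SS => C

/-- Supply at the upstream end of a link with capacity `C` carrying flux `q`:
`C` for a UC link or the upstream SUC part of an SS link, and `q` for a SOC link. -/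
def upSupply (C q : ℝ) : LinkState → ℝ
  | LinkState.UC => C
  | LinkState.SOC => q
  | LinkState.SS => C

/-- on a ring road with links of capacities `C1 < C2` carrying common
stationary flux `q`, where each link is UC, SOC, or SS, and where the boundary flux
condition of Theorem 3 (flux = min of upstream demand and downstream supply) holds at
both boundaries, link 1 cannot be SS, link 1 SOC excludes link 2 being UC or SS, and
the only possible configurations are: (a) both UC with `q ≤ C1`; (b) link 1 critical
(`q = C1`) with link 2 SS; (c) link 1 critical with link 2 SOC and `q = C1`;
(d) both SOC with `q < C1`. -/
theorem ring_road_stationary_configurations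
    (C1 C2 q : ℝ) (s1 s2 : LinkState)
    (hq0 : 0 ≤ q) (hC : C1 < C2)
    (h1UC : s1 = LinkState.UC → q ≤ C1)
    (h1cong : s1 = LinkState.SOC ∨ s1 = LinkState.SS → q < C1)
    (h2UC : s2 = LinkState.UC → q ≤ C2)
    (h2cong : s2 = LinkState.SOC ∨ s2 = LinkState.SS → q < C2)
    -- boundary 2: from link 1 into link 2
    (hb2 : q = min (downDemand C1 q s1) (upSupply C2 q s2))
    -- boundary 1: from link 2 back into link 1
    (hb1 : q = min (downDemand C2 q s2) (upSupply C1 q s1)) :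
    s1 ≠ LinkState.SS ∧
    ¬ (s1 = LinkState.SOC ∧ (s2 = LinkState.UC ∨ s2 = LinkState.SS)) ∧
    ((s1 = LinkState.UC ∧ s2 = LinkState.UC ∧ q ≤ C1) ∨
     (s1 = LinkState.UC ∧ s2 = LinkState.SS ∧ q = C1) ∨
     (s1 = LinkState.UC ∧ s2 = LinkState.SOC ∧ q = C1) ∨
     (s1 = LinkState.SOC ∧ s2 = LinkState.SOC ∧ q < C1)) := by
  cases s1 <;> cases s2 <;>
    simp only [downDemand, upSupply, min_def] at hb1 hb2 <;>
    split_ifs at hb1 hb2 <;>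
    simp only [reduceCtorEq, ne_eq, not_false_eq_true, true_and, and_true, false_and,
      and_false, false_or, or_false, not_and, not_or, true_or, or_true, imp_false,
      IsEmpty.forall_iff, forall_true_left, not_true_eq_false, not_false_eq_true] <;>
    first
      | linarith [h1UC rfl]
      | linarith [h1cong (Or.inl rfl)]
      | linarith [h1cong (Or.inr rfl)]
      | linarith
      | (refine ⟨?_, ?_, ?_⟩ <;> simp <;> first
          | linarith [h1UC rfl]
          | linarith [h1cong (Or.inl rfl)]
          | linarith [h1cong (Or.inr rfl)]
          | linarith)
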